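/- arXiv:2407.10894 — 2 statements merged into one kernel-verified Lean document; each statement's English description precedes it below -/
import Mathlib

section
/- For every s ∈ ℂ, the point (0, 0) ∈ ℂ × ℂ is not preperiodic under the map Φ_s : ℂ × ℂ → ℂ × ℂ defined by Φ_s(x, y) = (x² + s, y² + s + 10). -/
/-!
If `‖c‖ > 2`, the orbit of `0` under `z ↦ z ^ 2 + c` escapes: its norms increase strictly, so it
never repeats. Hence `0` can be preperiodic only when `‖c‖ ≤ 2`. The map `Φ_s` is the product of
`z ↦ z ^ 2 + s` and `z ↦ z ^ 2 + (s + 10)`, and a preperiodic point of a product has preperiodic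
coordinates, which would force both `‖s‖ ≤ 2` and `‖s + 10‖ ≤ 2`.
-/

/-- A point `x` is preperiodic under a self-map `f` if there exist
integers `0 ≤ m < n` with `f^[m] x = f^[n] x`. -/
def Preperiodic {α : Type*} (f : α → α) (x : α) : Prop :=
  ∃ m n : ℕ, m < n ∧ f^[m] x = f^[n] x

namespace Preperiodic

variable {α β : Type*}

theorem not_of_injective_orbit {f : α → α} {x : α} (h : Function.Injective fun n => f^[n] x) :
    ¬ Preperiodic f x := by
  rintro ⟨m, n, hmn, heq⟩
  exact hmn.ne (h heq)

theorem prodMap {f : α → α} {g : β → β} {x : α} {y : β} (h : Preperiodic (Prod.map f g) (x, y)) :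
    Preperiodic f x ∧ Preperiodic g y := by
  obtain ⟨m, n, hmn, heq⟩ := h
  simp only [Prod.map_iterate, Prod.map_apply, Prod.mk.injEq] at heq
  exact ⟨⟨m, n, hmn, heq.1⟩, ⟨m, n, hmn, heq.2⟩⟩

end Preperiodic

section QuadraticEscape

variable {𝕜 : Type*} [NormedDivisionRing 𝕜]

theorem norm_lt_norm_sq_add {z c : 𝕜} (hcz : ‖c‖ ≤ ‖z‖) (hz : 2 < ‖z‖) :
    ‖z‖ < ‖z ^ 2 + c‖ :=
  calc ‖z‖ < ‖z‖ ^ 2 - ‖z‖ := by nlinarith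
    _ ≤ ‖z ^ 2‖ - ‖-c‖ := by rw [norm_pow, norm_neg]; linarith
    _ ≤ ‖z ^ 2 - -c‖ := norm_sub_norm_le _ _
    _ = ‖z ^ 2 + c‖ := by rw [sub_neg_eq_add]

theorem norm_le_norm_iterate_sq_add_succ {c : 𝕜} (hc : 2 < ‖c‖) (k : ℕ) :
    ‖c‖ ≤ ‖(fun z => z ^ 2 + c)^[k + 1] 0‖ := by
  induction k with
  | zero => simp
  | succ k ih =>
    rw [Function.iterate_succ_apply']
    exact ih.trans (norm_lt_norm_sq_add ih (hc.trans_le ih)).le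

theorem strictMono_norm_iterate_sq_add {c : 𝕜} (hc : 2 < ‖c‖) :
    StrictMono fun n => ‖(fun z => z ^ 2 + c)^[n] 0‖ := by
  refine strictMono_nat_of_lt_succ fun n => ?_
  cases n with
  | zero => simpa using (zero_lt_two.trans hc)
  | succ k =>
    have hk := norm_le_norm_iterate_sq_add_succ hc k
    rw [Function.iterate_succ_apply' _ (k + 1)]
    exact norm_lt_norm_sq_add hk (hc.trans_le hk)

theorem norm_le_two_of_preperiodic_sq_add {c : 𝕜} (h : Preperiodic (fun z => z ^ 2 + c) 0) :
    ‖c‖ ≤ 2 := by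
  by_contra! hc
  exact Preperiodic.not_of_injective_orbit
    ((strictMono_norm_iterate_sq_add hc).injective.of_comp) h

end QuadraticEscape

theorem not_preperiodic_example (s : ℂ) :
    ¬ Preperiodic (fun p : ℂ × ℂ => (p.1 ^ 2 + s, p.2 ^ 2 + s + 10)) (0, 0) := by
  intro h
  have hprod : (fun p : ℂ × ℂ => (p.1 ^ 2 + s, p.2 ^ 2 + s + 10)) =
      Prod.map (fun z => z ^ 2 + s) (fun z => z ^ 2 + (s + 10)) := by
    funext p
    exact Prod.ext rfl (add_assoc _ _ _)
  rw [hprod] at h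
  obtain ⟨h₁, h₂⟩ := h.prodMap
  have hs := norm_le_two_of_preperiodic_sq_add h₁
  have hs10 := norm_le_two_of_preperiodic_sq_add h₂
  have : (10 : ℝ) ≤ ‖s + 10‖ + ‖s‖ := by
    simpa using norm_sub_le (s + 10) s
  linarith
end

section
/- For all c, z ∈ ℂ, the sequence n ↦ 2^{−n} · log(max(|f_c^n(z)|, 1)) converges to 0 if and only if the forward orbit {f_c^n(z) : n ≥ 0} of z under f_c is bounded. In particular, G_c(0) = 0 if and only if c lies in the Mandelbrot set. -/
/-!
Once ‖w‖ ≥ max 4 ‖c‖ we have ‖w ^ 2 + c‖ ≥ ‖w‖ ^ 2 / 2 ≥ ‖w‖, so the region is forward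
invariant and ‖f_c^[k] w‖ / 2 ≥ (‖w‖ / 2) ^ 2 ^ k: the normalized logarithms stay above
log (‖w‖ / 2) > 0. An unbounded orbit enters this region, while along a bounded orbit the
logarithms are bounded and are killed by the factor 2⁻ⁿ.
-/

open Filter

section QuadraticEscape

variable {𝕜 : Type*} [NormedDivisionRing 𝕜] (c : 𝕜)

theorem norm_sq_div_two_le_norm_sq_add {w : 𝕜} (h2 : 2 ≤ ‖w‖) (hc : ‖c‖ ≤ ‖w‖) :
    ‖w‖ ^ 2 / 2 ≤ ‖w ^ 2 + c‖ := by
  have hreverse := norm_sub_norm_le (w ^ 2) (-c)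
  rw [norm_pow, norm_neg, sub_neg_eq_add] at hreverse
  nlinarith

theorem pow_two_pow_le_norm_iterate {w : 𝕜} (h4 : 4 ≤ ‖w‖) (hc : ‖c‖ ≤ ‖w‖) (k : ℕ) :
    (‖w‖ / 2) ^ 2 ^ k ≤ ‖(fun w : 𝕜 => w ^ 2 + c)^[k] w‖ / 2 := by
  induction k generalizing w with
  | zero => simp
  | succ k ih =>
    have hsq := norm_sq_div_two_le_norm_sq_add c (by linarith) hc
    have hfw : ‖w‖ ≤ ‖w ^ 2 + c‖ := by nlinarith
    calc (‖w‖ / 2) ^ 2 ^ (k + 1) = ((‖w‖ / 2) ^ 2) ^ 2 ^ k := by rw [pow_succ', pow_mul]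
      _ ≤ (‖w ^ 2 + c‖ / 2) ^ 2 ^ k := by gcongr; linarith
      _ ≤ _ := ih (by linarith) (by linarith)

theorem log_half_norm_le_inv_two_pow_mul_log {w : 𝕜} (h4 : 4 ≤ ‖w‖) (hc : ‖c‖ ≤ ‖w‖) (k : ℕ) :
    Real.log (‖w‖ / 2) ≤
      ((2 : ℝ) ^ k)⁻¹ * Real.log (max ‖(fun w : 𝕜 => w ^ 2 + c)^[k] w‖ 1) := by
  have hpos : 0 < (‖w‖ / 2) ^ 2 ^ k := by positivity
  have hgrowth := pow_two_pow_le_norm_iterate c h4 hc k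
  have hlog_pow : Real.log ((‖w‖ / 2) ^ 2 ^ k) = 2 ^ k * Real.log (‖w‖ / 2) := by
    simp [Real.log_pow]
  rw [le_inv_mul_iff₀ (by positivity), ← hlog_pow]
  calc Real.log ((‖w‖ / 2) ^ 2 ^ k)
      ≤ Real.log (‖(fun w : 𝕜 => w ^ 2 + c)^[k] w‖ / 2) := Real.log_le_log hpos hgrowth
    _ ≤ _ := Real.log_le_log (hpos.trans_le hgrowth) (le_max_of_le_left (by linarith))

theorem not_tendsto_inv_two_pow_mul_log_of_not_isBounded {z : 𝕜}
    (h : ¬ Bornology.IsBounded (Set.range fun n : ℕ => (fun w : 𝕜 => w ^ 2 + c)^[n] z)) :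
    ¬ Tendsto (fun n : ℕ =>
        ((2 : ℝ) ^ n)⁻¹ * Real.log (max ‖(fun w : 𝕜 => w ^ 2 + c)^[n] z‖ 1))
      atTop (nhds 0) := by
  intro htends
  rw [isBounded_iff_forall_norm_le] at h
  push Not at h
  obtain ⟨_, ⟨N, rfl⟩, hN⟩ := h (max 4 ‖c‖)
  set w := (fun w : 𝕜 => w ^ 2 + c)^[N] z
  have h4 : 4 ≤ ‖w‖ := (le_max_left _ _).trans hN.le
  have hc : ‖c‖ ≤ ‖w‖ := (le_max_right _ _).trans hN.le
  have hlower : ∀ k, ((2 : ℝ) ^ N)⁻¹ * Real.log (‖w‖ / 2) ≤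
      ((2 : ℝ) ^ (k + N))⁻¹ * Real.log (max ‖(fun w : 𝕜 => w ^ 2 + c)^[k + N] z‖ 1) := by
    intro k
    rw [Function.iterate_add_apply, pow_add, mul_inv, mul_comm ((2 : ℝ) ^ k)⁻¹, mul_assoc]
    refine mul_le_mul_of_nonneg_left ?_ (by positivity)
    exact log_half_norm_le_inv_two_pow_mul_log c h4 hc k
  have hpos : 0 < ((2 : ℝ) ^ N)⁻¹ * Real.log (‖w‖ / 2) := by
    have := Real.log_pos (by linarith : (1 : ℝ) < ‖w‖ / 2)
    positivity
  exact hpos.not_ge <| ge_of_tendsto ((tendsto_add_atTop_iff_nat N).2 htends)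
    (Eventually.of_forall hlower)

end QuadraticEscape

theorem tendsto_inv_two_pow_mul_log_max_one {u : ℕ → ℝ} {C : ℝ} (hu : ∀ n, u n ≤ C) :
    Tendsto (fun n : ℕ => ((2 : ℝ) ^ n)⁻¹ * Real.log (max (u n) 1)) atTop (nhds 0) := by
  have hgeom : Tendsto (fun n : ℕ => ((2 : ℝ) ^ n)⁻¹ * Real.log (max C 1)) atTop (nhds 0) := by
    simpa [← inv_pow] using
      (tendsto_pow_atTop_nhds_zero_of_lt_one (r := (2 : ℝ)⁻¹) (by norm_num) (by norm_num)).mul_const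
        (Real.log (max C 1))
  refine squeeze_zero (fun n => ?_) (fun n => ?_) hgeom
  · have := Real.log_nonneg (le_max_right (u n) 1)
    positivity
  · gcongr
    exact hu n

theorem escape_rate_zero_iff_bounded_orbit (c z : ℂ) :
    Tendsto (fun n : ℕ =>
        ((2 : ℝ) ^ n)⁻¹ * Real.log (max ‖(fun w : ℂ => w ^ 2 + c)^[n] z‖ 1))
      atTop (nhds 0) ↔
    Bornology.IsBounded (Set.range fun n : ℕ => (fun w : ℂ => w ^ 2 + c)^[n] z) := by
  refine ⟨not_imp_not.1 (not_tendsto_inv_two_pow_mul_log_of_not_isBounded c), fun h => ?_⟩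
  obtain ⟨C, hC⟩ := isBounded_iff_forall_norm_le.1 h
  exact tendsto_inv_two_pow_mul_log_max_one fun n => hC _ ⟨n, rfl⟩
end
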